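/- Let ω be a nonzero 1-form on a finite connected metric graph C with all residues zero (value zero on all leaf edges), satisfying the Kirchhoff condition at internal vertices. Then there exists a loop ρ in C such that ∫_ρ ω = Σ_{e∈ρ} l(e)·ω(e⃗) ≠ 0. Equivalently, a holomorphic 1-form that is exact must be identically zero. -/

import Mathlib

open Finset

section GraphSetup

variable {V D : Type} [Fintype V] [Fintype D] [DecidableEq V] [DecidableEq D]

/-- A loop in a graph given by darts: a nonempty cyclic chain of darts, injective on
(unoriented) edges.  `rev` is orientation reversal and `tail` the initial vertex of
a dart; the head of `d` is `tail (rev d)`. -/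
def IsLoop (rev : D → D) (tail : D → V) (c : List D) : Prop :=
  c ≠ [] ∧ c.Nodup ∧ (∀ d ∈ c, rev d ∉ c) ∧
    c.Chain' (fun d d' => tail (rev d) = tail d') ∧
    ∀ a ∈ c.head?, ∀ b ∈ c.getLast?, tail (rev b) = tail a

/-- The integral of a 1-form `ω` along a loop `c`: `Σ l(e)·ω(e⃗)`. -/
def loopIntegral (len : D → ℝ) (ω : D → ℝ) (c : List D) : ℝ :=
  (c.map fun d => len d * ω d).sum

/-- A 1-form on the graph: antisymmetric under orientation reversal and satisfying
the Kirchhoff balancing condition at every internal (non-leaf) vertex. -/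
def IsBalanced (rev : D → D) (tail : D → V) (isLeaf : V → Prop) [DecidablePred isLeaf]
    (ω : D → ℝ) : Prop :=
  (∀ d, ω (rev d) = - ω d) ∧
    ∀ v, ¬ isLeaf v → ∑ d ∈ univ.filter (fun d => tail d = v), ω d = 0

/-- A 1-form is exact if its integral over every loop vanishes. -/
def IsExact (rev : D → D) (tail : D → V) (len : D → ℝ) (ω : D → ℝ) : Prop :=
  ∀ c : List D, IsLoop rev tail c → loopIntegral len ω c = 0

/-- A 1-form is holomorphic if its residues (its values on leaf edges) all vanish. -/
def IsHolomorphic (tail : D → V) (isLeaf : V → Prop) (ω : D → ℝ) : Prop :=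
  ∀ d, isLeaf (tail d) → ω d = 0

/-- Connectivity of the graph: any two vertices are joined by a chain of darts. -/
def GraphConnected (rev : D → D) (tail : D → V) : Prop :=
  ∀ v w : V, Relation.ReflTransGen (fun x y => ∃ d, tail d = x ∧ tail (rev d) = y) v w

end GraphSetup

/-!
Follow ω uphill. If ω(d) > 0, then ω(rev d) < 0 at the head of `d`; that vertex is not a leaf
(residues vanish), so by Kirchhoff some dart leaving it has ω > 0. Choosing such a successor
for every positive dart gives a self-map of a finite set, which has a periodic orbit. The
darts of that orbit are distinct and never reverse one another (ω is antisymmetric), so they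
form a loop, and the integral along it is a sum of positive terms `l(e)·ω(e⃗)`.
-/

open Function

theorem Function.exists_mem_periodicPts {α : Type*} [Finite α] [Nonempty α] (f : α → α) :
    ∃ x, x ∈ periodicPts f := by
  obtain ⟨y⟩ := ‹Nonempty α›
  obtain ⟨m, n, hmn, hfmn⟩ := Finite.exists_ne_map_eq_of_infinite fun k : ℕ => f^[k] y
  wlog hlt : m < n generalizing m n
  · exact this n m hmn.symm hfmn.symm (hmn.lt_or_gt.resolve_left hlt)
  refine ⟨f^[m] y, n - m, Nat.sub_pos_of_lt hlt, ?_⟩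
  rw [IsPeriodicPt, IsFixedPt, ← iterate_add_apply, Nat.sub_add_cancel hlt.le, hfmn]

section Loops

variable {V D : Type} (rev : D → D) (tail : D → V)

theorem isLoop_map_periodicOrbit {α : Type*} (φ : α → D) (f : α → α) (hφ : Injective φ)
    (hφ_rev : ∀ a b, φ b ≠ rev (φ a)) (hφ_step : ∀ a, tail (φ (f a)) = tail (rev (φ a)))
    {x : α} (hx : x ∈ periodicPts f) :
    IsLoop rev tail ((List.range (minimalPeriod f x)).map fun n => φ (f^[n] x)) := by
  have hpos := minimalPeriod_pos_of_mem_periodicPts hx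
  refine ⟨by simpa using hpos.ne', ?_, ?_, ?_, ?_⟩
  · rw [List.nodup_map_iff_inj_on List.nodup_range]
    intro m hm n hn hmn
    rw [List.mem_range] at hm hn
    exact (iterate_eq_iterate_iff_of_lt_minimalPeriod hm hn).1 (hφ hmn)
  · simp only [List.mem_map, List.mem_range]
    rintro _ ⟨m, -, rfl⟩ ⟨n, -, hn⟩
    exact hφ_rev _ _ hn
  · refine (List.isChain_map _).2 ((List.isChain_range _ _).2 fun m _ => ?_)
    rw [Nat.succ_eq_add_one, iterate_succ_apply', hφ_step]
  · intro a ha b hb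
    rw [List.head?_eq_getElem?] at ha
    rw [List.getLast?_eq_getElem?] at hb
    simp only [List.length_map, List.length_range, hpos, getElem?_pos, List.getElem_map,
      List.getElem_range, iterate_zero, id_eq, Option.mem_def, Option.some.injEq,
      tsub_lt_self_iff, Order.lt_one_iff, and_self] at ha hb
    subst ha hb
    rw [← hφ_step, ← iterate_succ_apply' f, Nat.succ_eq_add_one, Nat.sub_add_cancel hpos,
      iterate_minimalPeriod]

theorem loopIntegral_pos {len ω : D → ℝ} {c : List D} (hc : c ≠ [])
    (hlen : ∀ d ∈ c, 0 < len d) (hω : ∀ d ∈ c, 0 < ω d) : 0 < loopIntegral len ω c :=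
  List.sum_pos _ (by simpa using fun d hd => mul_pos (hlen d hd) (hω d hd)) (by simpa using hc)

theorem exists_pos_of_ne_zero {ω : D → ℝ} (hanti : ∀ d, ω (rev d) = -ω d) (hne : ω ≠ 0) :
    ∃ d, 0 < ω d := by
  obtain ⟨d, hd⟩ := Function.ne_iff.mp hne
  rcases hd.lt_or_gt with hneg | hpos
  · exact ⟨rev d, by rw [hanti]; exact neg_pos.2 hneg⟩
  · exact ⟨d, hpos⟩

theorem IsBalanced.exists_pos_of_pos [Fintype D] [DecidableEq V] {isLeaf : V → Prop}
    [DecidablePred isLeaf] {ω : D → ℝ} (hb : IsBalanced rev tail isLeaf ω)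
    (hh : IsHolomorphic tail isLeaf ω) {d : D} (hd : 0 < ω d) :
    ∃ d', tail d' = tail (rev d) ∧ 0 < ω d' := by
  have hrev : ω (rev d) < 0 := by rw [hb.1]; exact neg_neg_of_pos hd
  have hinternal : ¬ isLeaf (tail (rev d)) := fun hleaf => hrev.ne (hh _ hleaf)
  obtain ⟨d', hd', hpos⟩ := exists_pos_of_sum_zero_of_exists_nonzero ω (hb.2 _ hinternal)
    ⟨rev d, by simp, hrev.ne⟩
  exact ⟨d', (mem_filter.1 hd').2, hpos⟩

end Loops

theorem stmt7_general {V D : Type} [Fintype D] [DecidableEq V]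
    (rev : D → D) (tail : D → V) (isLeaf : V → Prop) [DecidablePred isLeaf]
    (len : D → ℝ)
    (hlen : ∀ d, 0 < len d)
    (ω : D → ℝ)
    (hb : IsBalanced rev tail isLeaf ω)
    (hh : IsHolomorphic tail isLeaf ω)
    (hne : ω ≠ 0) :
    ∃ c : List D, IsLoop rev tail c ∧ loopIntegral len ω c ≠ 0 := by
  obtain ⟨d₀, hd₀⟩ := exists_pos_of_ne_zero rev hb.1 hne
  have : Nonempty {d // 0 < ω d} := ⟨⟨d₀, hd₀⟩⟩
  have hsucc : ∀ p : {d // 0 < ω d}, ∃ q : {d // 0 < ω d}, tail q.1 = tail (rev p.1) :=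
    fun p =>
      let ⟨d', htail, hpos⟩ := hb.exists_pos_of_pos rev tail hh p.2
      ⟨⟨d', hpos⟩, htail⟩
  choose succ hsucc using hsucc
  obtain ⟨x, hx⟩ := exists_mem_periodicPts succ
  have hloop := isLoop_map_periodicOrbit rev tail Subtype.val succ Subtype.val_injective
    (fun p q hqp => by have := q.2; rw [hqp, hb.1] at this; linarith [p.2]) hsucc hx
  refine ⟨_, hloop, (loopIntegral_pos hloop.1 (fun d _ => hlen d) ?_).ne'⟩
  simp only [List.mem_map]
  rintro _ ⟨n, -, rfl⟩
  exact (succ^[n] x).2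

/-- A nonzero holomorphic (all residues zero) balanced 1-form on a finite connected
metric graph has a loop along which its integral `Σ l(e)·ω(e⃗)` is nonzero. -/
theorem stmt7 {V D : Type} [Fintype V] [Fintype D] [DecidableEq V] [DecidableEq D]
    (rev : D → D) (tail : D → V) (isLeaf : V → Prop) [DecidablePred isLeaf]
    (len : D → ℝ)
    (hrev : ∀ d, rev (rev d) = d) (hrevne : ∀ d, rev d ≠ d)
    (hconn : GraphConnected rev tail)
    (hleaf : ∀ v, isLeaf v ↔ (univ.filter fun d => tail d = v).card = 1)
    (htri : ∀ v, ¬ isLeaf v → (univ.filter fun d => tail d = v).card = 3)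
    (hlen : ∀ d, 0 < len d) (hlensym : ∀ d, len (rev d) = len d)
    (ω : D → ℝ)
    (hb : IsBalanced rev tail isLeaf ω)
    (hh : IsHolomorphic tail isLeaf ω)
    (hne : ω ≠ 0) :
    ∃ c : List D, IsLoop rev tail c ∧ loopIntegral len ω c ≠ 0 :=
  stmt7_general rev tail isLeaf len hlen ω hb hh hne
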